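/- Let 0 < H < 1, α > 0 and let m ≥ 1 be a fixed integer. For ε > 0, integers n ≥ 2 and 1 ≤ i ≤ n−1, set d_{i,ε,n} = ((i/n)^{2H}/((i/n)^{2H}+ε))^{m+1/2} − ((i/n)^{2H}/((i/n)^{2H}+(1/2) n^{−2(α+H)}))^{m+1/2}, and define A_m(ε,n) = n^{−2} Σ_{1≤i≠j≤n−1} R_H(i/n, j/n)^{2m} (i/n)^{−H(2m+1)} (j/n)^{−H(2m+1)} d_{i,ε,n} d_{j,ε,n}. Then lim_{ε→0} limsup_{n→∞} |A_m(ε,n)| = 0. -/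

import Mathlib

open MeasureTheory Filter Topology Real

/-- Covariance function of fractional Brownian motion with Hurst parameter `H`. -/
noncomputable def RH (H t s : ℝ) : ℝ :=
  (t ^ (2 * H) + s ^ (2 * H) - |t - s| ^ (2 * H)) / 2

/-- The coefficient `d_{i,ε,n}` (for fixed chaos order `m`). -/
noncomputable def dcoef (H α : ℝ) (m : ℕ) (ε : ℝ) (n i : ℕ) : ℝ :=
  (((i : ℝ) / n) ^ (2 * H) / (((i : ℝ) / n) ^ (2 * H) + ε)) ^ ((m : ℝ) + 1 / 2)
    - (((i : ℝ) / n) ^ (2 * H) /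
        (((i : ℝ) / n) ^ (2 * H) + (1 / 2) * (n : ℝ) ^ (-(2 : ℝ) * (α + H)))) ^
      ((m : ℝ) + 1 / 2)

/-- The quantity `A_m(ε,n)`. -/
noncomputable def Am (H α : ℝ) (m : ℕ) (ε : ℝ) (n : ℕ) : ℝ :=
  ((n : ℝ) ^ 2)⁻¹ *
    ∑ i ∈ Finset.Ico 1 n, ∑ j ∈ Finset.Ico 1 n,
      if i = j then 0 else
        RH H ((i : ℝ) / n) ((j : ℝ) / n) ^ (2 * m) *
          ((i : ℝ) / n) ^ (-(H * (2 * (m : ℝ) + 1))) *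
          ((j : ℝ) / n) ^ (-(H * (2 * (m : ℝ) + 1))) *
          dcoef H α m ε n i * dcoef H α m ε n j

/-!
Since `|R_H(t,s)| ≤ t^H s^H` (a consequence of `|t^H - s^H| ≤ |t - s|^H`), the `(i,j)` summand of
`A_m(ε,n)` is at most `t^{-H} s^{-H} |d_i| |d_j|` with `t = i/n`, `s = j/n`. The elementary bound
`1 - y^p ≤ min(1, p(1/y - 1))`, interpolated to a power `θ ∈ (0,1]`, gives
`|d_i| ≤ C(ε,n) t^{-2Hθ}` with `C(ε,n) = (pε)^θ + (p n^{-2(α+H)}/2)^θ` and `p = m + 1/2`.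
Hence `|A_m(ε,n)| ≤ (C(ε,n) n⁻¹ ∑ (i/n)^{-β})^2` with `β = H + 2Hθ`, and this Riemann sum is at
most `1/(1-β)` as soon as `β < 1`, which `θ = (1-H)/2` ensures. As `n → ∞` the bound tends to
`((pε)^θ/(1-β))^2`, which vanishes as `ε → 0`.
-/

namespace Real

lemma rpow_sub_rpow_le_abs_sub_rpow {t s p : ℝ} (ht : 0 ≤ t) (hs : 0 ≤ s) (hp : 0 ≤ p)
    (hp1 : p ≤ 1) : t ^ p - s ^ p ≤ |t - s| ^ p := by
  have : t ^ p ≤ (|t - s| + s) ^ p :=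
    rpow_le_rpow ht (by linarith [le_abs_self (t - s)]) hp
  linarith [rpow_add_le_add_rpow (abs_nonneg (t - s)) hs hp hp1]

lemma abs_rpow_sub_rpow_le {t s p : ℝ} (ht : 0 ≤ t) (hs : 0 ≤ s) (hp : 0 ≤ p)
    (hp1 : p ≤ 1) : |t ^ p - s ^ p| ≤ |t - s| ^ p :=
  abs_sub_le_iff.2 ⟨rpow_sub_rpow_le_abs_sub_rpow ht hs hp hp1,
    abs_sub_comm t s ▸ rpow_sub_rpow_le_abs_sub_rpow hs ht hp hp1⟩

lemma one_sub_rpow_le_mul_inv_sub_one {y p : ℝ} (hy : 0 < y) (hp : 0 ≤ p) :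
    1 - y ^ p ≤ p * (y⁻¹ - 1) := by
  have hexp : log y * p + 1 ≤ y ^ p := rpow_def_of_pos hy p ▸ add_one_le_exp _
  have hlog : -log y ≤ y⁻¹ - 1 := log_inv y ▸ log_le_sub_one_of_pos (inv_pos.2 hy)
  nlinarith

lemma le_rpow_of_le_of_le_one {a b θ : ℝ} (ha : 0 ≤ a) (ha1 : a ≤ 1) (hab : a ≤ b)
    (hθ : 0 ≤ θ) (hθ1 : θ ≤ 1) : a ≤ b ^ θ :=
  calc a = a ^ (1 : ℝ) := (rpow_one a).symm
    _ ≤ a ^ θ := rpow_le_rpow_of_exponent_ge' ha ha1 hθ hθ1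
    _ ≤ b ^ θ := rpow_le_rpow ha hab hθ

end Real

lemma abs_RH_le {H t s : ℝ} (hH : 0 ≤ H) (hH1 : H ≤ 1) (ht : 0 ≤ t) (hs : 0 ≤ s) :
    |RH H t s| ≤ t ^ H * s ^ H := by
  have hsq : ∀ {u : ℝ}, 0 ≤ u → u ^ (2 * H) = (u ^ H) ^ 2 := fun hu => by
    rw [mul_comm, rpow_mul hu, rpow_two]
  have hlow : |t ^ H - s ^ H| ≤ |t - s| ^ H := abs_rpow_sub_rpow_le ht hs hH hH1
  have hupp : |t - s| ^ H ≤ t ^ H + s ^ H :=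
    (rpow_le_rpow (abs_nonneg _) ((abs_sub _ _).trans (by rw [abs_of_nonneg ht,
      abs_of_nonneg hs])) hH).trans (rpow_add_le_add_rpow ht hs hH hH1)
  have hT := rpow_nonneg ht H
  have hS := rpow_nonneg hs H
  rw [RH, hsq ht, hsq hs, hsq (abs_nonneg _), abs_le]
  rw [abs_le] at hlow
  constructor <;> nlinarith [rpow_nonneg (abs_nonneg (t - s)) H]

lemma abs_RH_pow_mul_rpow_mul_rpow_le {H t s : ℝ} (hH : 0 ≤ H) (hH1 : H ≤ 1) (ht : 0 < t)
    (hs : 0 < s) (m : ℕ) :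
    |RH H t s ^ (2 * m) * t ^ (-(H * (2 * (m : ℝ) + 1))) * s ^ (-(H * (2 * (m : ℝ) + 1)))|
      ≤ t ^ (-H) * s ^ (-H) := by
  have hcancel : ∀ {u : ℝ}, 0 < u →
      (u ^ H) ^ (2 * m) * u ^ (-(H * (2 * (m : ℝ) + 1))) = u ^ (-H) := fun hu => by
    rw [← rpow_natCast, ← rpow_mul hu.le, ← rpow_add hu]
    push_cast; ring_nf
  calc |RH H t s ^ (2 * m) * t ^ (-(H * (2 * (m : ℝ) + 1))) * s ^ (-(H * (2 * (m : ℝ) + 1)))|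
      = |RH H t s| ^ (2 * m) * t ^ (-(H * (2 * (m : ℝ) + 1)))
          * s ^ (-(H * (2 * (m : ℝ) + 1))) := by
        rw [abs_mul, abs_mul, abs_pow, abs_of_pos (rpow_pos_of_pos ht _),
          abs_of_pos (rpow_pos_of_pos hs _)]
    _ ≤ (t ^ H * s ^ H) ^ (2 * m) * t ^ (-(H * (2 * (m : ℝ) + 1)))
          * s ^ (-(H * (2 * (m : ℝ) + 1))) := by
        gcongr
        exact abs_RH_le hH hH1 ht.le hs.le
    _ = t ^ (-H) * s ^ (-H) := by
        rw [mul_pow, ← hcancel ht, ← hcancel hs]; ring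

lemma rpow_div_add_le_one {x e p : ℝ} (hx : 0 < x) (he : 0 ≤ e) (hp : 0 ≤ p) :
    (x / (x + e)) ^ p ≤ 1 :=
  rpow_le_one (by positivity) ((div_le_one (by positivity)).2 (by linarith)) hp

lemma one_sub_rpow_div_add_le {x e p θ : ℝ} (hx : 0 < x) (he : 0 ≤ e) (hp : 0 ≤ p)
    (hθ : 0 ≤ θ) (hθ1 : θ ≤ 1) :
    1 - (x / (x + e)) ^ p ≤ (p * e) ^ θ * x ^ (-θ) := by
  have hlin : 1 - (x / (x + e)) ^ p ≤ p * e / x := by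
    have := one_sub_rpow_le_mul_inv_sub_one (y := x / (x + e)) (by positivity) hp
    rwa [inv_div, add_div, div_self hx.ne', add_sub_cancel_left, ← mul_div_assoc] at this
  rw [rpow_neg hx.le, ← div_eq_mul_inv, ← div_rpow (by positivity) hx.le]
  exact le_rpow_of_le_of_le_one (by linarith [rpow_div_add_le_one hx he hp])
    (by linarith [rpow_nonneg (by positivity : 0 ≤ x / (x + e)) p]) hlin hθ hθ1

lemma abs_rpow_div_add_sub_rpow_div_add_le {x e₁ e₂ p θ : ℝ} (hx : 0 < x) (he₁ : 0 ≤ e₁)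
    (he₂ : 0 ≤ e₂) (hp : 0 ≤ p) (hθ : 0 ≤ θ) (hθ1 : θ ≤ 1) :
    |(x / (x + e₁)) ^ p - (x / (x + e₂)) ^ p| ≤ ((p * e₁) ^ θ + (p * e₂) ^ θ) * x ^ (-θ) := by
  have h₁ := one_sub_rpow_div_add_le hx he₁ hp hθ hθ1
  have h₂ := one_sub_rpow_div_add_le hx he₂ hp hθ hθ1
  have h₁' := rpow_div_add_le_one hx he₁ hp
  have h₂' := rpow_div_add_le_one hx he₂ hp
  rw [abs_sub_le_iff]
  constructor <;> linarith

lemma abs_dcoef_le {H α θ ε : ℝ} {m n i : ℕ} (hθ : 0 ≤ θ) (hθ1 : θ ≤ 1) (hε : 0 ≤ ε)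
    (hi : 1 ≤ i) (hn : 1 ≤ n) :
    |dcoef H α m ε n i| ≤ ((((m : ℝ) + 1 / 2) * ε) ^ θ
        + (((m : ℝ) + 1 / 2) * ((1 / 2) * (n : ℝ) ^ (-(2 : ℝ) * (α + H)))) ^ θ)
      * ((i : ℝ) / n) ^ (-(2 * H * θ)) := by
  have ht : (0 : ℝ) < i / n := by positivity
  rw [neg_mul_eq_mul_neg, rpow_mul ht.le]
  exact abs_rpow_div_add_sub_rpow_div_add_le (rpow_pos_of_pos ht _) hε (by positivity)
    (by positivity) hθ hθ1

lemma one_sub_mul_rpow_neg_le_rpow_sub_rpow {x β : ℝ} (hx : 0 ≤ x) (hβ : 0 ≤ β)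
    (hβ1 : β ≤ 1) : (1 - β) * (x + 1) ^ (-β) ≤ (x + 1) ^ (1 - β) - x ^ (1 - β) := by
  have ha : 0 < x + 1 := by linarith
  have hs : -1 ≤ -(x + 1)⁻¹ := by
    linarith [inv_le_one_of_one_le₀ (by linarith : (1 : ℝ) ≤ x + 1)]
  have hbern := rpow_one_add_le_one_add_mul_self hs (by linarith : 0 ≤ 1 - β) (by linarith)
  have hx' : x = (x + 1) * (1 + -(x + 1)⁻¹) := by field_simp; ring
  have hneg : (x + 1) ^ (-β) = (x + 1) ^ (1 - β) * (x + 1)⁻¹ := by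
    rw [← rpow_neg_one, ← rpow_add ha]; ring_nf
  calc (1 - β) * (x + 1) ^ (-β)
      = (x + 1) ^ (1 - β) - (x + 1) ^ (1 - β) * (1 + (1 - β) * -(x + 1)⁻¹) := by
        rw [hneg]; ring
    _ ≤ (x + 1) ^ (1 - β) - (x + 1) ^ (1 - β) * (1 + -(x + 1)⁻¹) ^ (1 - β) := by
        gcongr
    _ = (x + 1) ^ (1 - β) - x ^ (1 - β) := by
        rw [← mul_rpow ha.le (by linarith), ← hx']

lemma sum_Icc_rpow_neg_mul_le {β : ℝ} (hβ : 0 ≤ β) (hβ1 : β ≤ 1) (N : ℕ) :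
    (∑ i ∈ Finset.Icc 1 N, (i : ℝ) ^ (-β)) * (1 - β) ≤ (N : ℝ) ^ (1 - β) := by
  induction N with
  | zero => simpa using rpow_nonneg le_rfl (1 - β)
  | succ N ih =>
    rw [Finset.sum_Icc_succ_top (by omega), add_mul]
    have := one_sub_mul_rpow_neg_le_rpow_sub_rpow (N.cast_nonneg (α := ℝ)) hβ hβ1
    push_cast
    linarith

lemma inv_mul_sum_Ico_div_rpow_neg_le {β : ℝ} (hβ : 0 ≤ β) (hβ1 : β < 1) (n : ℕ) :
    (n : ℝ)⁻¹ * ∑ i ∈ Finset.Ico 1 n, ((i : ℝ) / n) ^ (-β) ≤ (1 - β)⁻¹ := by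
  rcases Nat.eq_zero_or_pos n with rfl | hn
  · simp [hβ1.le]
  have hn' : (0 : ℝ) < n := by exact_mod_cast hn
  have hsum : ∑ i ∈ Finset.Ico 1 n, (i : ℝ) ^ (-β) ≤ (n : ℝ) ^ (1 - β) / (1 - β) := by
    rw [le_div_iff₀ (by linarith)]
    refine le_trans ?_ (sum_Icc_rpow_neg_mul_le hβ hβ1.le n)
    gcongr
    exact Finset.Ico_subset_Icc_self
  have hterm : ∀ i : ℕ, ((i : ℝ) / n) ^ (-β) = (n : ℝ) ^ β * (i : ℝ) ^ (-β) := fun i => by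
    rw [div_rpow i.cast_nonneg hn'.le, rpow_neg hn'.le, div_inv_eq_mul, mul_comm]
  calc (n : ℝ)⁻¹ * ∑ i ∈ Finset.Ico 1 n, ((i : ℝ) / n) ^ (-β)
      = (n : ℝ)⁻¹ * (n : ℝ) ^ β * ∑ i ∈ Finset.Ico 1 n, (i : ℝ) ^ (-β) := by
        simp_rw [hterm, ← Finset.mul_sum, mul_assoc]
    _ ≤ (n : ℝ)⁻¹ * (n : ℝ) ^ β * ((n : ℝ) ^ (1 - β) / (1 - β)) := by gcongr
    _ = (1 - β)⁻¹ := by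
        rw [mul_div_assoc', mul_assoc, ← rpow_add hn', add_sub_cancel, rpow_one,
          inv_mul_cancel₀ hn'.ne', one_div]

lemma abs_sum_sum_le_sq {ι : Type*} (s : Finset ι) {a : ι → ι → ℝ} {b : ι → ℝ}
    (h : ∀ i ∈ s, ∀ j ∈ s, |a i j| ≤ b i * b j) :
    |∑ i ∈ s, ∑ j ∈ s, a i j| ≤ (∑ i ∈ s, b i) ^ 2 :=
  calc |∑ i ∈ s, ∑ j ∈ s, a i j| ≤ ∑ i ∈ s, ∑ j ∈ s, |a i j| :=
        (Finset.abs_sum_le_sum_abs _ _).trans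
          (Finset.sum_le_sum fun _ _ => Finset.abs_sum_le_sum_abs _ _)
    _ ≤ ∑ i ∈ s, ∑ j ∈ s, b i * b j :=
        Finset.sum_le_sum fun i hi => Finset.sum_le_sum fun j hj => h i hi j hj
    _ = (∑ i ∈ s, b i) ^ 2 := by rw [sq, Finset.sum_mul_sum]

lemma abs_Am_summand_le {H α ε γ C : ℝ} {m n i j : ℕ} (hH : 0 ≤ H) (hH1 : H ≤ 1)
    (hC : 0 ≤ C) (hi : (0 : ℝ) < i / n) (hj : (0 : ℝ) < j / n)
    (hdi : |dcoef H α m ε n i| ≤ C * ((i : ℝ) / n) ^ (-γ))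
    (hdj : |dcoef H α m ε n j| ≤ C * ((j : ℝ) / n) ^ (-γ)) :
    |if i = j then 0 else
        RH H ((i : ℝ) / n) ((j : ℝ) / n) ^ (2 * m) *
          ((i : ℝ) / n) ^ (-(H * (2 * (m : ℝ) + 1))) *
          ((j : ℝ) / n) ^ (-(H * (2 * (m : ℝ) + 1))) *
          dcoef H α m ε n i * dcoef H α m ε n j|
      ≤ C * ((i : ℝ) / n) ^ (-(H + γ)) * (C * ((j : ℝ) / n) ^ (-(H + γ))) := by
  have hsplit : ∀ {t : ℝ}, 0 < t → C * t ^ (-(H + γ)) = t ^ (-H) * (C * t ^ (-γ)) :=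
    fun ht => by rw [neg_add, rpow_add ht]; ring
  rw [hsplit hi, hsplit hj]
  split_ifs
  · rw [abs_zero]
    exact mul_nonneg (mul_nonneg (rpow_nonneg hi.le _) (mul_nonneg hC (rpow_nonneg hi.le _)))
      (mul_nonneg (rpow_nonneg hj.le _) (mul_nonneg hC (rpow_nonneg hj.le _)))
  rw [abs_mul, abs_mul, mul_mul_mul_comm (_ ^ (-H)), ← mul_assoc]
  gcongr
  exact abs_RH_pow_mul_rpow_mul_rpow_le hH hH1 hi hj m

lemma abs_Am_le {H α ε γ C : ℝ} {m n : ℕ} (hH : 0 ≤ H) (hγ : 0 ≤ γ) (hHγ : H + γ < 1)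
    (hC : 0 ≤ C) (hd : ∀ i ∈ Finset.Ico 1 n, |dcoef H α m ε n i| ≤ C * ((i : ℝ) / n) ^ (-γ)) :
    |Am H α m ε n| ≤ (C / (1 - (H + γ))) ^ 2 := by
  have hpos : ∀ i ∈ Finset.Ico 1 n, (0 : ℝ) < i / n := fun i hi => by
    obtain ⟨hi1, hin⟩ := Finset.mem_Ico.1 hi
    have : 0 < n := by omega
    positivity
  have hriemann := inv_mul_sum_Ico_div_rpow_neg_le (by linarith) hHγ n
  calc |Am H α m ε n|
      ≤ ((n : ℝ) ^ 2)⁻¹ * (∑ i ∈ Finset.Ico 1 n, C * ((i : ℝ) / n) ^ (-(H + γ))) ^ 2 := by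
        rw [Am, abs_mul, abs_of_nonneg (by positivity)]
        gcongr
        exact abs_sum_sum_le_sq _ fun i hi j hj => abs_Am_summand_le hH (by linarith) hC
          (hpos i hi) (hpos j hj) (hd i hi) (hd j hj)
    _ = (C * ((n : ℝ)⁻¹ * ∑ i ∈ Finset.Ico 1 n, ((i : ℝ) / n) ^ (-(H + γ)))) ^ 2 := by
        rw [← Finset.mul_sum]; ring
    _ ≤ (C / (1 - (H + γ))) ^ 2 := by
        rw [div_eq_mul_inv]
        gcongr

lemma tendsto_rpow_mul_half_mul_natCast_rpow_neg {p θ a : ℝ} (hθ : 0 < θ) (ha : 0 < a) :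
    Tendsto (fun n : ℕ => (p * ((1 / 2) * (n : ℝ) ^ (-(2 : ℝ) * a))) ^ θ) atTop (𝓝 0) := by
  have hpow : Tendsto (fun n : ℕ => (n : ℝ) ^ (-(2 : ℝ) * a)) atTop (𝓝 0) := by
    simpa [neg_mul, Function.comp_def] using
      (tendsto_rpow_neg_atTop (by positivity : 0 < 2 * a)).comp tendsto_natCast_atTop_atTop
  have hcont : Continuous fun x : ℝ => (p * ((1 / 2) * x)) ^ θ := by
    fun_prop (disch := exact hθ.le)
  simpa [zero_rpow hθ.ne', Function.comp_def] using (hcont.tendsto 0).comp hpow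

lemma tendsto_limsup_of_le_of_tendsto {u v : ℝ → ℕ → ℝ} {V : ℝ → ℝ}
    (hu : ∀ ε > 0, ∀ n, 0 ≤ u ε n) (huv : ∀ ε > 0, ∀ n, u ε n ≤ v ε n)
    (hv : ∀ ε > 0, Tendsto (v ε) atTop (𝓝 (V ε))) (hV : Tendsto V (𝓝[>] 0) (𝓝 0)) :
    Tendsto (fun ε => limsup (u ε) atTop) (𝓝[>] 0) (𝓝 0) := by
  have hbounds : ∀ ε > 0, 0 ≤ limsup (u ε) atTop ∧ limsup (u ε) atTop ≤ V ε := fun ε hε => by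
    have hbdd : IsBoundedUnder (· ≤ ·) atTop (u ε) :=
      (hv ε hε).isBoundedUnder_le.mono_le (Eventually.of_forall (huv ε hε))
    have hcobdd : IsCoboundedUnder (· ≤ ·) atTop (u ε) :=
      isCoboundedUnder_le_of_le atTop (hu ε hε)
    exact ⟨le_limsup_of_frequently_le (Frequently.of_forall (hu ε hε)) hbdd,
      (hv ε hε).limsup_eq ▸ limsup_le_limsup (Eventually.of_forall (huv ε hε)) hcobdd
        (hv ε hε).isBoundedUnder_le⟩
  exact tendsto_of_tendsto_of_tendsto_of_le_of_le' tendsto_const_nhds hV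
    (eventually_mem_nhdsWithin.mono fun ε hε => (hbounds ε hε).1)
    (eventually_mem_nhdsWithin.mono fun ε hε => (hbounds ε hε).2)

theorem statement10_general (H α : ℝ) (hH : 0 < H) (hH' : H < 1) (hα : 0 < α)
    (m : ℕ) :
    Tendsto (fun ε : ℝ => Filter.limsup (fun n : ℕ => |Am H α m ε n|) atTop)
      (nhdsWithin 0 (Set.Ioi 0)) (𝓝 0) := by
  set θ : ℝ := (1 - H) / 2
  set p : ℝ := (m : ℝ) + 1 / 2
  have hθ : 0 < θ := by simp only [θ]; linarith
  have hθ1 : θ ≤ 1 := by simp only [θ]; linarith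
  have hexp : H + 2 * H * θ < 1 := by simp only [θ]; nlinarith
  have hbound : ∀ ε > 0, ∀ n : ℕ, |Am H α m ε n| ≤
      (((p * ε) ^ θ + (p * ((1 / 2) * (n : ℝ) ^ (-(2 : ℝ) * (α + H)))) ^ θ)
        / (1 - (H + 2 * H * θ))) ^ 2 := fun ε hε n =>
    abs_Am_le hH.le (by positivity) hexp (by positivity) fun i hi =>
      abs_dcoef_le hθ.le hθ1 hε.le (Finset.mem_Ico.1 hi).1 (by
        have := Finset.mem_Ico.1 hi; omega)
  refine tendsto_limsup_of_le_of_tendsto (fun _ _ _ => abs_nonneg _) hbound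
    (V := fun ε => ((p * ε) ^ θ / (1 - (H + 2 * H * θ))) ^ 2) (fun ε _ => ?_) ?_
  · simpa using (((tendsto_rpow_mul_half_mul_natCast_rpow_neg hθ (by positivity)).const_add
      ((p * ε) ^ θ)).div_const (1 - (H + 2 * H * θ))).pow 2
  · have hcont : Continuous fun x : ℝ => ((p * x) ^ θ / (1 - (H + 2 * H * θ))) ^ 2 :=
      (((continuous_rpow_const hθ.le).comp (continuous_const_mul p)).div_const _).pow 2
    simpa [zero_rpow hθ.ne'] using tendsto_nhdsWithin_of_tendsto_nhds (hcont.tendsto 0)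

theorem statement10 (H α : ℝ) (hH : 0 < H) (hH' : H < 1) (hα : 0 < α)
    (m : ℕ) (hm : 1 ≤ m) :
    Tendsto (fun ε : ℝ => Filter.limsup (fun n : ℕ => |Am H α m ε n|) atTop)
      (nhdsWithin 0 (Set.Ioi 0)) (𝓝 0) :=
  statement10_general H α hH hH' hα m
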